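/- Let A be an N×N matrix with deg det(I - A·z) = N - r and deg sum(adj(I - A·z)) = N - 1 - s where s > r. Then the order of vanishing at z = 0 of sum(adj(A - I·z)) is strictly greater than that of det(A - I·z), so the rational function sum(adj(A - I·z))/det(A - I·z) vanishes at z = 0 (i.e., the series Euler characteristic is 0). -/

import Mathlib

open Polynomial Matrix

/-- The sum of all the entries of a matrix. -/
def sumEntries {R : Type*} [AddCommMonoid R] {N : ℕ} (M : Matrix (Fin N) (Fin N) R) : R :=
  ∑ i, ∑ j, M i j

/-- `det(I - A·z)`. -/
noncomputable def detIsubAz {N : ℕ} (A : Matrix (Fin N) (Fin N) ℚ) : ℚ[X] :=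
  ((1 : Matrix (Fin N) (Fin N) ℚ[X]) - (X : ℚ[X]) • A.map C).det

/-- `det(A - I·z)`. -/
noncomputable def detAsubIz {N : ℕ} (A : Matrix (Fin N) (Fin N) ℚ) : ℚ[X] :=
  (A.map C - (X : ℚ[X]) • (1 : Matrix (Fin N) (Fin N) ℚ[X])).det

/-- `sum(adj(I - A·z))`. -/
noncomputable def sumAdjIsubAz {N : ℕ} (A : Matrix (Fin N) (Fin N) ℚ) : ℚ[X] :=
  sumEntries (adjugate ((1 : Matrix (Fin N) (Fin N) ℚ[X]) - (X : ℚ[X]) • A.map C))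

/-- `sum(adj(A - I·z))`. -/
noncomputable def sumAdjAsubIz {N : ℕ} (A : Matrix (Fin N) (Fin N) ℚ) : ℚ[X] :=
  sumEntries (adjugate (A.map C - (X : ℚ[X]) • (1 : Matrix (Fin N) (Fin N) ℚ[X])))

/-!
Over Laurent polynomials `A - z I = -z (I - z⁻¹ A)`. Hence `det(A - z I)` and
`sum(adj(A - z I))` are, up to sign, the reflections of `det(I - A z)` in degree `N` and of
`sum(adj(I - A z))` in degree `N - 1`. Reflecting a nonzero polynomial of degree `d` in degree
`n ≥ d` produces one of order `n - d` at `0`, so the two orders of vanishing are `r` and `s`.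
Since `s > r`, the numerator of the reduced fraction still vanishes at `0`.
-/

open LaurentPolynomial hiding C

namespace Polynomial

section CommSemiring
variable {R : Type*} [CommSemiring R] {p : R[X]} {n : ℕ}

lemma reflect_eq_reverse_mul_X_pow (hp : p.natDegree ≤ n) :
    p.reflect n = p.reverse * X ^ (n - p.natDegree) := by
  have := reflect_mul p 1 le_rfl (natDegree_one.trans_le (Nat.zero_le (n - p.natDegree)))
  rwa [mul_one, Nat.add_sub_cancel' hp, reflect_one] at this

lemma toLaurent_reflect (hp : p.natDegree ≤ n) :
    toLaurent (p.reflect n) = invert (toLaurent p) * T n := by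
  rw [reflect_eq_reverse_mul_X_pow hp, map_mul, toLaurent_reverse, map_pow, toLaurent_X,
    T_pow, mul_assoc, ← T_add, Nat.cast_sub hp]
  ring_nf

lemma natTrailingDegree_reflect (hp0 : p ≠ 0) (hp : p.natDegree ≤ n) :
    (p.reflect n).natTrailingDegree = n - p.natDegree := by
  rw [reflect_eq_reverse_mul_X_pow hp, natTrailingDegree_mul_X_pow (mt reverse_eq_zero.mp hp0),
    natTrailingDegree_reverse, zero_add]

end CommSemiring

variable {R : Type*} [CommRing R] {p : R[X]} {n : ℕ}

lemma eq_neg_one_pow_mul_reflect_of_toLaurent_eq {q : R[X]} (hp : p.natDegree ≤ n)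
    (h : toLaurent q = (-T 1) ^ n * invert (toLaurent p)) :
    q = (-1) ^ n * p.reflect n := by
  apply toLaurent_injective
  rw [h, map_mul, toLaurent_reflect hp, map_pow, map_neg, map_one, neg_pow, T_pow, neg_pow,
    mul_one, mul_assoc, mul_comm (T (n : ℤ))]

lemma rootMultiplicity_zero_neg_one_pow_mul_reflect (k : ℕ) (hp0 : p ≠ 0)
    (hp : p.natDegree ≤ n) : ((-1) ^ k * p.reflect n).rootMultiplicity 0 = n - p.natDegree := by
  rw [rootMultiplicity_eq_natTrailingDegree', ← natTrailingDegree_reflect hp0 hp]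
  rcases neg_one_pow_eq_or R[X] k with h | h <;> simp [h]

end Polynomial

namespace Matrix
variable {R : Type*} [CommRing R] {n : Type*} [Fintype n] [DecidableEq n]

lemma map_toLaurent_sub_X_smul_one (A : Matrix n n R) :
    (toLaurent : R[X] →+* R[T;T⁻¹]).mapMatrix (A.map C - (X : R[X]) • 1) =
      (-T 1 : R[T;T⁻¹]) •
        ((invert : R[T;T⁻¹] ≃ₐ[R] R[T;T⁻¹]).toRingHom.comp toLaurent).mapMatrix
          (1 - (X : R[X]) • A.map C) := by
  refine Matrix.ext fun i j => ?_
  by_cases h : i = j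
  · subst h
    simp [mul_sub, ← mul_assoc, neg_add_eq_sub]
  · simp [h]

lemma toLaurent_det_sub_X_smul_one (A : Matrix n n R) :
    toLaurent (A.map C - (X : R[X]) • 1).det =
      (-T 1) ^ Fintype.card n * invert (toLaurent (1 - (X : R[X]) • A.map C).det) := by
  rw [RingHom.map_det (toLaurent (R := R)), map_toLaurent_sub_X_smul_one, det_smul,
    ← RingHom.map_det]
  rfl

lemma mapMatrix_toLaurent_adjugate_sub_X_smul_one (A : Matrix n n R) :
    (toLaurent : R[X] →+* R[T;T⁻¹]).mapMatrix (A.map C - (X : R[X]) • 1).adjugate =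
      (-T 1 : R[T;T⁻¹]) ^ (Fintype.card n - 1) •
        ((invert : R[T;T⁻¹] ≃ₐ[R] R[T;T⁻¹]).toRingHom.comp toLaurent).mapMatrix
          (1 - (X : R[X]) • A.map C).adjugate := by
  rw [RingHom.map_adjugate (toLaurent (R := R)), map_toLaurent_sub_X_smul_one, adjugate_smul,
    ← RingHom.map_adjugate]

end Matrix

lemma RatFunc.eval_mk_eq_zero_of_rootMultiplicity_lt {K : Type*} [Field K] {p q : K[X]} {a : K}
    (h : q.rootMultiplicity a < p.rootMultiplicity a) :
    RatFunc.eval (RingHom.id K) a (RatFunc.mk p q) = 0 := by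
  rcases eq_or_ne q 0 with rfl | hq
  · simp [RatFunc.mk_eq_div]
  have hp : p ≠ 0 := by
    rintro rfl
    simp at h
  set F := RatFunc.mk p q with hF_def
  have hF : F ≠ 0 := by
    rw [hF_def, RatFunc.mk_eq_div]
    exact div_ne_zero (RatFunc.algebraMap_ne_zero hp) (RatFunc.algebraMap_ne_zero hq)
  have hcross : F.num * q = p * F.denom :=
    (RatFunc.num_mul_eq_mul_denom_iff hq).mpr (RatFunc.mk_eq_div p q)
  have hmult := congrArg (rootMultiplicity a) hcross
  rw [rootMultiplicity_mul (mul_ne_zero (RatFunc.num_ne_zero hF) hq),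
    rootMultiplicity_mul (mul_ne_zero hp (RatFunc.denom_ne_zero F))] at hmult
  have hnum : F.num.eval a = 0 :=
    (rootMultiplicity_pos (RatFunc.num_ne_zero hF)).mp (by omega)
  rw [RatFunc.eval, eval₂_id, hnum, zero_div]

lemma sumEntries_map {R S F : Type*} [AddCommMonoid R] [AddCommMonoid S] [FunLike F R S]
    [AddMonoidHomClass F R S] {N : ℕ} (f : F) (M : Matrix (Fin N) (Fin N) R) :
    sumEntries (M.map f) = f (sumEntries M) := by
  simp [sumEntries, map_sum]

lemma sumEntries_smul {R : Type*} [NonUnitalNonAssocSemiring R] {N : ℕ} (c : R)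
    (M : Matrix (Fin N) (Fin N) R) : sumEntries (c • M) = c * sumEntries M := by
  simp [sumEntries, Finset.mul_sum]

lemma detAsubIz_eq_neg_one_pow_mul_reflect {N : ℕ} (A : Matrix (Fin N) (Fin N) ℚ)
    (h : (detIsubAz A).natDegree ≤ N) : detAsubIz A = (-1) ^ N * (detIsubAz A).reflect N :=
  eq_neg_one_pow_mul_reflect_of_toLaurent_eq h <| by
    rw [detAsubIz, detIsubAz, toLaurent_det_sub_X_smul_one, Fintype.card_fin]

lemma sumAdjAsubIz_eq_neg_one_pow_mul_reflect {N : ℕ} (A : Matrix (Fin N) (Fin N) ℚ)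
    (h : (sumAdjIsubAz A).natDegree ≤ N - 1) :
    sumAdjAsubIz A = (-1) ^ (N - 1) * (sumAdjIsubAz A).reflect (N - 1) :=
  eq_neg_one_pow_mul_reflect_of_toLaurent_eq h <| by
    rw [sumAdjAsubIz, sumAdjIsubAz, ← sumEntries_map, ← RingHom.mapMatrix_apply,
      mapMatrix_toLaurent_adjugate_sub_X_smul_one, sumEntries_smul, RingHom.mapMatrix_apply,
      sumEntries_map, Fintype.card_fin]
    rfl

theorem stmt7_general {N : ℕ} (A : Matrix (Fin N) (Fin N) ℚ) (r s : ℕ)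
    (hr : r ≤ N) (hs : s ≤ N - 1) (hsr : r < s)
    (hdet : (detIsubAz A).natDegree = N - r)
    (hadj : (sumAdjIsubAz A).natDegree = N - 1 - s) (hadj0 : sumAdjIsubAz A ≠ 0) :
    (detAsubIz A).rootMultiplicity 0 < (sumAdjAsubIz A).rootMultiplicity 0 ∧
      RatFunc.eval (RingHom.id ℚ) 0 (RatFunc.mk (sumAdjAsubIz A) (detAsubIz A)) = 0 := by
  have hdet0 : detIsubAz A ≠ 0 := fun h ↦ by
    have h1 : (detIsubAz A).eval 0 = 1 := eval_charpolyRev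
    simp [h] at h1
  have hdetle : (detIsubAz A).natDegree ≤ N := hdet ▸ Nat.sub_le _ _
  have hadjle : (sumAdjIsubAz A).natDegree ≤ N - 1 := hadj ▸ Nat.sub_le _ _
  have hord : (detAsubIz A).rootMultiplicity 0 < (sumAdjAsubIz A).rootMultiplicity 0 := by
    rw [detAsubIz_eq_neg_one_pow_mul_reflect A hdetle,
      sumAdjAsubIz_eq_neg_one_pow_mul_reflect A hadjle,
      rootMultiplicity_zero_neg_one_pow_mul_reflect _ hdet0 hdetle,
      rootMultiplicity_zero_neg_one_pow_mul_reflect _ hadj0 hadjle, hdet, hadj]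
    omega
  exact ⟨hord, RatFunc.eval_mk_eq_zero_of_rootMultiplicity_lt hord⟩

/-- If `deg det(I - A·z) = N - r` and `deg sum(adj(I - A·z)) = N - 1 - s` with `s > r`,
then the order of vanishing at `z = 0` of `sum(adj(A - I·z))` is strictly greater than that
of `det(A - I·z)`, and the rational function `sum(adj(A - I·z))/det(A - I·z)` vanishes at
`z = 0`. -/
theorem stmt7 {N : ℕ} (A : Matrix (Fin N) (Fin N) ℚ) (r s : ℕ)
    (hr : r ≤ N) (hN : 1 ≤ N) (hs : s ≤ N - 1) (hsr : r < s)
    (hdet : (detIsubAz A).natDegree = N - r)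
    (hadj : (sumAdjIsubAz A).natDegree = N - 1 - s) (hadj0 : sumAdjIsubAz A ≠ 0) :
    (detAsubIz A).rootMultiplicity 0 < (sumAdjAsubIz A).rootMultiplicity 0 ∧
      RatFunc.eval (RingHom.id ℚ) 0 (RatFunc.mk (sumAdjAsubIz A) (detAsubIz A)) = 0 :=
  stmt7_general A r s hr hs hsr hdet hadj hadj0
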